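/- Let (X₁,X₂) ~ CN₂(μ, Σ, ν₁, ν₂). Then the conditional distribution of X₂ given X₁ = x₁ is contaminated normal CN(μ_{2.1}, Σ_{22.1}, ω_{ν₂}, ν₂), where μ_{2.1} = μ₂ + Σ₂₁ Σ₁₁^{-1}(x₁ - μ₁), Σ_{22.1} = Σ₂₂ - Σ₂₁ Σ₁₁^{-1} Σ₁₂, and ω_{ν₂} = ν₁ φ(x₁|μ₁, ν₂^{-1}Σ₁₁) / ψ^{CN}(x₁|μ₁, Σ₁₁, ν₁, ν₂); that is, the conditional density of X₂ at x₂ equals ω_{ν₂} φ(x₂|μ_{2.1}, ν₂^{-1}Σ_{22.1}) + (1-ω_{ν₂}) φ(x₂|μ_{2.1}, Σ_{22.1}). -/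

import Mathlib

/-!
Completing the square in the quadratic form splits a bivariate normal density into the marginal
density of `x₁` times the normal density of `x₂` with mean `μ_{2.1}` and variance the Schur
complement `Σ_{22.1}`. Scaling `Σ` by `ν₂⁻¹` scales both variances and leaves the regression
coefficient `Σ₂₁ / Σ₁₁` unchanged, so both components of the CN mixture factor through the same
conditional mean; dividing by the marginal CN density of `x₁` then replaces the weight `ν₁` by its
posterior `ω_{ν₂}`.
-/

open MeasureTheory Real Matrix

noncomputable def normalPDF (μ v x : ℝ) : ℝ :=
  (Real.sqrt (2 * Real.pi * v))⁻¹ * Real.exp (-((x - μ) ^ 2) / (2 * v))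

noncomputable def normalPDF2 (μ : Fin 2 → ℝ) (S : Matrix (Fin 2) (Fin 2) ℝ)
    (x : Fin 2 → ℝ) : ℝ :=
  (2 * Real.pi)⁻¹ * (Real.sqrt S.det)⁻¹ *
    Real.exp (-(1 / 2) * ((x - μ) ⬝ᵥ S⁻¹ *ᵥ (x - μ)))

noncomputable def cnPDF2 (μ : Fin 2 → ℝ) (S : Matrix (Fin 2) (Fin 2) ℝ)
    (ν₁ ν₂ : ℝ) (x : Fin 2 → ℝ) : ℝ :=
  ν₁ * normalPDF2 μ (ν₂⁻¹ • S) x + (1 - ν₁) * normalPDF2 μ S x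

noncomputable def cnPDF (μ σ2 ν₁ ν₂ x : ℝ) : ℝ :=
  ν₁ * normalPDF μ (σ2 / ν₂) x + (1 - ν₁) * normalPDF μ σ2 x

lemma normalPDF_pos (μ x : ℝ) {v : ℝ} (hv : 0 < v) : 0 < normalPDF μ v x := by
  unfold normalPDF
  positivity

lemma cnPDF_pos (μ x : ℝ) {σ2 ν₁ ν₂ : ℝ} (hσ2 : 0 < σ2) (hν₁ : ν₁ ∈ Set.Ioo (0 : ℝ) 1)
    (hν₂ : 0 < ν₂) : 0 < cnPDF μ σ2 ν₁ ν₂ x := by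
  obtain ⟨hν₁0, hν₁1⟩ := hν₁
  have h₁ : 0 < 1 - ν₁ := sub_pos.2 hν₁1
  have hA := normalPDF_pos μ x (div_pos hσ2 hν₂)
  have hB := normalPDF_pos μ x hσ2
  unfold cnPDF
  positivity

namespace Matrix

variable {S : Matrix (Fin 2) (Fin 2) ℝ}

lemma det_fin_two_eq_mul_schur (h₀ : S 0 0 ≠ 0) :
    S.det = S 0 0 * (S 1 1 - S 1 0 / S 0 0 * S 0 1) := by
  rw [det_fin_two]
  field_simp

lemma dotProduct_inv_mulVec_fin_two (hsym : S 0 1 = S 1 0) (h₀ : S 0 0 ≠ 0) (hdet : S.det ≠ 0)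
    (v : Fin 2 → ℝ) :
    v ⬝ᵥ S⁻¹ *ᵥ v = v 0 ^ 2 / S 0 0
      + (v 1 - S 1 0 / S 0 0 * v 0) ^ 2 / (S 1 1 - S 1 0 / S 0 0 * S 0 1) := by
  have hschur : S 1 1 - S 1 0 / S 0 0 * S 0 1 = S.det / S 0 0 := by
    rw [det_fin_two_eq_mul_schur h₀, mul_div_cancel_left₀ _ h₀]
  rw [hschur, inv_def, adjugate_fin_two, Ring.inverse_eq_inv']
  simp only [dotProduct, mulVec, Fin.sum_univ_two, smul_apply, of_apply, cons_val', cons_val_zero,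
    cons_val_one, empty_val', cons_val_fin_one, smul_eq_mul, hsym]
  field_simp
  rw [det_fin_two, hsym]
  ring

end Matrix

lemma normalPDF_mul_normalPDF (m₁ m₂ : ℝ) {v₁ : ℝ} (hv₁ : 0 ≤ v₁) (v₂ : ℝ) (y₁ y₂ : ℝ) :
    normalPDF m₁ v₁ y₁ * normalPDF m₂ v₂ y₂
      = (2 * π)⁻¹ * (√(v₁ * v₂))⁻¹ *
          exp (-(1 / 2) * ((y₁ - m₁) ^ 2 / v₁ + (y₂ - m₂) ^ 2 / v₂)) := by
  have hsqrt : √(2 * π * v₁) * √(2 * π * v₂) = 2 * π * √(v₁ * v₂) := by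
    rw [← sqrt_mul (by positivity),
      show 2 * π * v₁ * (2 * π * v₂) = (2 * π) ^ 2 * (v₁ * v₂) by ring,
      sqrt_mul (by positivity), sqrt_sq (by positivity)]
  unfold normalPDF
  rw [mul_mul_mul_comm, ← mul_inv, hsqrt, ← exp_add, mul_inv]
  congr 2
  ring

lemma normalPDF2_fin_two_eq_mul {S : Matrix (Fin 2) (Fin 2) ℝ} (hS : S.PosDef)
    (μ : Fin 2 → ℝ) (x₁ x₂ : ℝ) :
    normalPDF2 μ S ![x₁, x₂] = normalPDF (μ 0) (S 0 0) x₁ *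
      normalPDF (μ 1 + S 1 0 / S 0 0 * (x₁ - μ 0)) (S 1 1 - S 1 0 / S 0 0 * S 0 1) x₂ := by
  have h₀ : 0 < S 0 0 := hS.diag_pos
  have hdet : S.det = S 0 0 * (S 1 1 - S 1 0 / S 0 0 * S 0 1) := det_fin_two_eq_mul_schur h₀.ne'
  have hQ := dotProduct_inv_mulVec_fin_two (hS.isHermitian.apply 0 1).symm h₀.ne' hS.det_pos.ne'
    (![x₁, x₂] - μ)
  simp only [Pi.sub_apply, cons_val_zero, cons_val_one, sub_sub] at hQ
  rw [normalPDF_mul_normalPDF _ _ h₀.le, ← hdet, ← hQ]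
  rfl

lemma normalPDF2_inv_smul_fin_two_eq_mul {S : Matrix (Fin 2) (Fin 2) ℝ} (hS : S.PosDef)
    {ν : ℝ} (hν : 0 < ν) (μ : Fin 2 → ℝ) (x₁ x₂ : ℝ) :
    normalPDF2 μ (ν⁻¹ • S) ![x₁, x₂] = normalPDF (μ 0) (S 0 0 / ν) x₁ *
      normalPDF (μ 1 + S 1 0 / S 0 0 * (x₁ - μ 0)) ((S 1 1 - S 1 0 / S 0 0 * S 0 1) / ν) x₂ := by
  rw [normalPDF2_fin_two_eq_mul (hS.smul (inv_pos.2 hν))]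
  simp only [Matrix.smul_apply, smul_eq_mul, mul_div_mul_left _ _ (inv_ne_zero hν.ne')]
  congr 2 <;> ring

/-- Bayes' rule for the mixing weight. -/
lemma mixture_div_eq_mixture {ν a b p q : ℝ} (h : ν * a + (1 - ν) * b ≠ 0) :
    (ν * (a * p) + (1 - ν) * (b * q)) / (ν * a + (1 - ν) * b)
      = ν * a / (ν * a + (1 - ν) * b) * p + (1 - ν * a / (ν * a + (1 - ν) * b)) * q := by
  field_simp
  ring

/-- Conditional of a bivariate contaminated normal: the conditional density of `X₂` given
`X₁ = x₁` equals the univariate contaminated normal density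
`ω_{ν₂} φ(x₂ | μ_{2.1}, ν₂⁻¹ Σ_{22.1}) + (1 - ω_{ν₂}) φ(x₂ | μ_{2.1}, Σ_{22.1})`. -/
theorem cn2_conditional (μ : Fin 2 → ℝ) (S : Matrix (Fin 2) (Fin 2) ℝ) (hS : S.PosDef)
    (ν₁ ν₂ : ℝ) (hν₁ : ν₁ ∈ Set.Ioo (0 : ℝ) 1) (hν₂ : ν₂ ∈ Set.Ioo (0 : ℝ) 1)
    (x₁ x₂ : ℝ) :
    cnPDF2 μ S ν₁ ν₂ ![x₁, x₂] / cnPDF (μ 0) (S 0 0) ν₁ ν₂ x₁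
      = (let μ21 : ℝ := μ 1 + S 1 0 / S 0 0 * (x₁ - μ 0);
         let S221 : ℝ := S 1 1 - S 1 0 / S 0 0 * S 0 1;
         let ω : ℝ := ν₁ * normalPDF (μ 0) (S 0 0 / ν₂) x₁ / cnPDF (μ 0) (S 0 0) ν₁ ν₂ x₁;
         ω * normalPDF μ21 (S221 / ν₂) x₂ + (1 - ω) * normalPDF μ21 S221 x₂) := by
  have hmarg := cnPDF_pos (μ 0) x₁ (hS.diag_pos (i := 0)) hν₁ hν₂.1
  rw [cnPDF2, normalPDF2_fin_two_eq_mul hS, normalPDF2_inv_smul_fin_two_eq_mul hS hν₂.1]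
  exact mixture_div_eq_mixture hmarg.ne'
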